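/- There exists a constant C > 0 such that for all r ≥ 1 and all a ∈ [1/√2, 1], the function f_a^±(r) = ∓i ∫_0^∞ e^{-rs}(s² + 1 - a² ∓ 2ais)^{-1/2} ds satisfies |f_a^±(r)| ≤ C r^{-1/2}. -/

import Mathlib

open MeasureTheory Real

/-- `f_a^±(r) = ∓i ∫_0^∞ e^{-rs}(s² + 1 - a² ∓ 2ais)^{-1/2} ds`, with the principal
branch of the inverse square root; `sgn = 1` gives `f_a^+` and `sgn = -1` gives `f_a^-`. -/
noncomputable def fpm (sgn a r : ℝ) : ℂ :=
  (-(sgn : ℂ)) * Complex.I *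
    ∫ s in Set.Ioi (0 : ℝ),
      Complex.exp (-(r * s : ℝ)) *
        (((s ^ 2 + 1 - a ^ 2 : ℝ) : ℂ) - (sgn : ℂ) * ((2 * a * s : ℝ) : ℂ) * Complex.I) ^
          (-(1 / 2) : ℂ)

lemma aux_integrable {r : ℝ} (hr : 0 < r) :
    IntegrableOn (fun s : ℝ => s ^ (-(1/2) : ℝ) * Real.exp (-(r * s))) (Set.Ioi 0) := by
  have h := integrableOn_rpow_mul_exp_neg_mul_rpow (p := 1) (s := (-(1/2) : ℝ)) (b := r)
    (by norm_num) one_pos hr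
  refine h.congr_fun (fun x hx => ?_) measurableSet_Ioi
  simp only [Real.rpow_one]
  ring_nf

lemma aux_integral {r : ℝ} (hr : 0 < r) :
    ∫ s in Set.Ioi (0:ℝ), s ^ (-(1/2) : ℝ) * Real.exp (-(r * s))
      = Real.Gamma (1/2) * r ^ (-(1/2) : ℝ) := by
  have h := integral_rpow_mul_exp_neg_mul_Ioi (a := (1/2 : ℝ)) (r := r) (by norm_num) hr
  have e : ((1:ℝ)/2 - 1) = (-(1/2) : ℝ) := by norm_num
  rw [e] at h
  rw [h, one_div, Real.inv_rpow hr.le, ← Real.rpow_neg hr.le]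
  ring

/-- There is `C > 0` with `|f_a^±(r)| ≤ C r^{-1/2}` for all `r ≥ 1` and `a ∈ [1/√2, 1]`. -/
theorem stmt_5 :
    ∃ C > (0 : ℝ), ∀ r : ℝ, 1 ≤ r → ∀ a : ℝ, 1 / Real.sqrt 2 ≤ a → a ≤ 1 →
      ∀ sgn : ℝ, sgn = 1 ∨ sgn = -1 →
        ‖fpm sgn a r‖ ≤ C * r ^ (-(1 / 2) : ℝ) := by
  refine ⟨Real.Gamma (1/2), Real.Gamma_pos_of_pos (by norm_num), ?_⟩
  intro r hr a ha1 ha2 sgn hsgn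
  have hrpos : (0:ℝ) < r := lt_of_lt_of_le one_pos hr
  have hsgn1 : |sgn| = 1 := by rcases hsgn with h | h <;> simp [h]
  have ha0 : (1:ℝ)/2 ≤ a := by
    refine le_trans ?_ ha1
    rw [div_le_div_iff₀ (by norm_num) (Real.sqrt_pos.mpr (by norm_num))]
    nlinarith [Real.sq_sqrt (by norm_num : (2:ℝ) ≥ 0), Real.sqrt_nonneg 2,
      Real.sqrt_le_sqrt (by norm_num : (2:ℝ) ≤ 4)]
  -- pointwise bound
  have key : ∀ s : ℝ, s ∈ Set.Ioi (0:ℝ) →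
      ‖Complex.exp (-(r * s : ℝ)) *
        (((s ^ 2 + 1 - a ^ 2 : ℝ) : ℂ) - (sgn : ℂ) * ((2 * a * s : ℝ) : ℂ) * Complex.I) ^
          (-(1 / 2) : ℂ)‖ ≤ s ^ (-(1/2) : ℝ) * Real.exp (-(r * s)) := by
    intro s hs
    rw [Set.mem_Ioi] at hs
    set z : ℂ := ((s ^ 2 + 1 - a ^ 2 : ℝ) : ℂ) - (sgn : ℂ) * ((2 * a * s : ℝ) : ℂ) * Complex.I
    have hzim : z.im = -(sgn * (2 * a * s)) := by simp [z, ← Complex.ofReal_pow]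
    have hzabs : s ≤ ‖z‖ := by
      have h1 : |z.im| ≤ ‖z‖ := Complex.abs_im_le_norm z
      have h2 : |z.im| = 2 * a * s := by
        rw [hzim, abs_neg, abs_mul, hsgn1, one_mul, abs_of_nonneg (by nlinarith)]
      nlinarith [h1, h2.symm ▸ h1]
    have hcpow : ‖z ^ (-(1 / 2) : ℂ)‖ ≤ s ^ (-(1/2) : ℝ) := by
      have h := Complex.norm_cpow_le z (-(1 / 2) : ℂ)
      have him : ((-(1 / 2) : ℂ)).im = 0 := by simp
      have hre : ((-(1 / 2) : ℂ)).re = (-(1/2) : ℝ) := by simp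
      rw [him, mul_zero, Real.exp_zero, div_one, hre] at h
      refine h.trans ?_
      exact Real.rpow_le_rpow_of_nonpos hs hzabs (by norm_num)
    calc ‖Complex.exp (-(r * s : ℝ)) * z ^ (-(1 / 2) : ℂ)‖
        = Real.exp (-(r * s)) * ‖z ^ (-(1 / 2) : ℂ)‖ := by
          rw [norm_mul, Complex.norm_exp]
          simp
      _ ≤ Real.exp (-(r * s)) * s ^ (-(1/2) : ℝ) := by
          exact mul_le_mul_of_nonneg_left hcpow (Real.exp_nonneg _)
      _ = s ^ (-(1/2) : ℝ) * Real.exp (-(r * s)) := mul_comm _ _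
  have hnorm : ‖fpm sgn a r‖ ≤
      ∫ s in Set.Ioi (0:ℝ), s ^ (-(1/2) : ℝ) * Real.exp (-(r * s)) := by
    rw [fpm]
    rw [norm_mul, norm_mul, Complex.norm_I, norm_neg, Complex.norm_real, Real.norm_eq_abs, hsgn1,
      mul_one, one_mul]
    exact norm_integral_le_of_norm_le (aux_integrable hrpos)
      ((ae_restrict_iff' measurableSet_Ioi).mpr (Filter.Eventually.of_forall key))
  calc ‖fpm sgn a r‖ ≤ _ := hnorm
    _ = Real.Gamma (1/2) * r ^ (-(1/2) : ℝ) := aux_integral hrpos
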